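/- Let S be a finite set of points in ℝ² in strictly convex position with |S| ≥ 3, let r ∈ S, and let r₁ ∈ S be such that the open segment between r and r₁ contains no point of conv(S \ {r}) — equivalently, r and r₁ are adjacent vertices of the convex polygon conv(S). Then for every point a in the open segment (r, r₁), the set S' = (S \ {r}) ∪ {a} satisfies: a is an extreme point of conv(S'). -/

import Mathlib

/-! The hypothesis puts `a` outside `conv (S \ {r})`, and a point `a ∉ conv s` is always extreme in
`conv (s ∪ {a})`: every point of that hull lies on a segment `[a, z]` with `z ∈ conv s`, and if `a`
were strictly inside a segment `[x₁, x₂]` with `x₁ ≠ a`, solving for `a` would write it as a convex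
combination of the two far endpoints `z₁, z₂ ∈ conv s`. -/

section

variable {𝕜 E : Type*} [Field 𝕜] [LinearOrder 𝕜] [IsStrictOrderedRing 𝕜]
  [AddCommGroup E] [Module 𝕜 E]

theorem mem_extremePoints_convexHull_insert {s : Set E} {a : E} (ha : a ∉ convexHull 𝕜 s) :
    a ∈ (convexHull 𝕜 (insert a s)).extremePoints 𝕜 := by
  rcases s.eq_empty_or_nonempty with rfl | hs
  · simp
  obtain ⟨b, hb⟩ := hs
  rw [convexHull_insert ⟨b, hb⟩, convexJoin_singleton_left, mem_extremePoints_iff_left]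
  refine ⟨Set.mem_biUnion (subset_convexHull 𝕜 s hb) (left_mem_segment 𝕜 a b), ?_⟩
  rintro x₁ hx₁ x₂ hx₂ ⟨t₁, t₂, ht₁, ht₂, ht, hax⟩
  obtain ⟨z₁, hz₁, u₁, v₁, -, hv₁, huv₁, rfl⟩ := Set.mem_iUnion₂.1 hx₁
  obtain ⟨z₂, hz₂, u₂, v₂, -, hv₂, huv₂, rfl⟩ := Set.mem_iUnion₂.1 hx₂
  rcases hv₁.eq_or_lt with rfl | hv₁
  · simp [show u₁ = 1 by linarith]
  refine absurd ?_ ha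
  have hc : 0 < t₁ * v₁ + t₂ * v₂ := by positivity
  set c := t₁ * v₁ + t₂ * v₂
  have hca : c • a = (t₁ * v₁) • z₁ + (t₂ * v₂) • z₂ := by
    rw [eq_sub_of_add_eq huv₁, eq_sub_of_add_eq huv₂] at hax
    linear_combination (norm := module) ht • a - hax
  have hcomb := convex_convexHull 𝕜 s hz₁ hz₂ (by positivity : 0 ≤ c⁻¹ * (t₁ * v₁))
    (by positivity : 0 ≤ c⁻¹ * (t₂ * v₂)) (by rw [← mul_add, inv_mul_cancel₀ hc.ne'])
  rwa [mul_smul _ (t₁ * v₁), mul_smul _ (t₂ * v₂), ← smul_add, ← hca, smul_smul,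
    inv_mul_cancel₀ hc.ne', one_smul] at hcomb

end

theorem stmt16_general (S : Finset (EuclideanSpace ℝ (Fin 2)))
    (r r₁ : EuclideanSpace ℝ (Fin 2))
    (hedge : Disjoint (openSegment ℝ r r₁)
      (convexHull ℝ ((S : Set (EuclideanSpace ℝ (Fin 2))) \ {r}))) :
    ∀ a ∈ openSegment ℝ r r₁,
      a ∈ Set.extremePoints ℝ
        (convexHull ℝ (((S : Set (EuclideanSpace ℝ (Fin 2))) \ {r}) ∪ {a})) := by
  intro a ha
  rw [Set.union_singleton]
  exact mem_extremePoints_convexHull_insert (hedge.notMem_of_mem_left ha)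

theorem stmt16 (S : Finset (EuclideanSpace ℝ (Fin 2))) (h3 : 3 ≤ S.card)
    (hconvpos : ∀ x ∈ S, x ∉ convexHull ℝ ((S : Set (EuclideanSpace ℝ (Fin 2))) \ {x}))
    (r r₁ : EuclideanSpace ℝ (Fin 2)) (hr : r ∈ S) (hr1 : r₁ ∈ S) (hne : r ≠ r₁)
    (hedge : Disjoint (openSegment ℝ r r₁)
      (convexHull ℝ ((S : Set (EuclideanSpace ℝ (Fin 2))) \ {r}))) :
    ∀ a ∈ openSegment ℝ r r₁,
      a ∈ Set.extremePoints ℝ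
        (convexHull ℝ (((S : Set (EuclideanSpace ℝ (Fin 2))) \ {r}) ∪ {a})) :=
  stmt16_general S r r₁ hedge
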